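/- arXiv:2002.03830 — 3 statements merged into one kernel-verified Lean document; each statement's English description precedes it below -/
import Mathlib

section
/- If the linear integral operator f ↦ (g ↦ ∫_G Ψ(g, g̃) f(g̃) dμ(g̃)) on L²(G) is equivariant with respect to the left regular representation (i.e., mapping L_ḡ[f] to L_ḡ[output] for all ḡ and all f), and Ψ is continuous, then Ψ satisfies Ψ(ḡg, ḡg̃) = Ψ(g, g̃) for all ḡ, g, g̃ ∈ G, so the operator is a group convolution with kernel ψ(u) = Ψ(e, u). -/
/-! Testing the equivariance identity against `f ∈ C_c(G) ⊆ L²(G)` and substituting `gt ↦ gbar * gt`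
(left invariance of `μ`) gives `∫ Ψ(gbar g, gbar u) f u = ∫ Ψ(g, u) f u` for every such `f`.
A continuous function is determined by its integrals against `C_c(G)`, since `μ` charges every
nonempty open set; hence `Ψ(gbar g, gbar ·) = Ψ(g, ·)`. -/

open MeasureTheory

section TestFunctions

variable {X : Type*} [TopologicalSpace X] [RegularSpace X] [LocallyCompactSpace X]
  [MeasurableSpace X] [OpensMeasurableSpace X]
  {μ : Measure X} [μ.IsOpenPosMeasure] [IsFiniteMeasureOnCompacts μ]

theorem Continuous.eq_zero_of_forall_integral_mul_eq_zero {h : X → ℝ} (hh : Continuous h)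
    (hint : ∀ φ : X → ℝ, Continuous φ → HasCompactSupport φ → ∫ x, h x * φ x ∂μ = 0) :
    h = 0 := by
  funext x
  by_contra hx
  obtain ⟨φ, hφ_supp, hφ_nonneg, hφx⟩ := exists_continuous_nonneg_pos x
  -- Test against `h * φ`: the integrand `h² φ` is nonnegative and nonzero at `x`.
  have hpos : 0 < ∫ y, h y * (h y * φ y) ∂μ :=
    (hh.mul (hh.mul φ.continuous)).integral_pos_of_hasCompactSupport_nonneg_nonzero
      (hφ_supp.mul_left.mul_left) fun y => show 0 ≤ h y * (h y * φ y) by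
        simpa only [← mul_assoc] using mul_nonneg (mul_self_nonneg (h y)) (hφ_nonneg y)
      (mul_ne_zero hx (mul_ne_zero hx hφx))
  exact hpos.ne' (hint _ (hh.mul φ.continuous) hφ_supp.mul_left)

theorem Continuous.eq_of_forall_integral_mul_eq {h₁ h₂ : X → ℝ}
    (hh₁ : Continuous h₁) (hh₂ : Continuous h₂)
    (hint : ∀ φ : X → ℝ, Continuous φ → HasCompactSupport φ →
      ∫ x, h₁ x * φ x ∂μ = ∫ x, h₂ x * φ x ∂μ) :
    h₁ = h₂ := by
  refine sub_eq_zero.mp <|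
    (hh₁.sub hh₂).eq_zero_of_forall_integral_mul_eq_zero (μ := μ) fun φ hφ hφ_supp => ?_
  have hi₁ : Integrable (fun x => h₁ x * φ x) μ :=
    (hh₁.mul hφ).integrable_of_hasCompactSupport hφ_supp.mul_left
  have hi₂ : Integrable (fun x => h₂ x * φ x) μ :=
    (hh₂.mul hφ).integrable_of_hasCompactSupport hφ_supp.mul_left
  simp only [Pi.sub_apply, sub_mul]
  rw [integral_sub hi₁ hi₂, hint φ hφ hφ_supp, sub_self]

end TestFunctions

/-- If the linear integral operator `T[f](g) = ∫ Ψ(g,gt) f(gt) dμ(gt)` on `L²(G)`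
is equivariant w.r.t. the left regular representation (`T[L_gbar f] = L_gbar[T f]`),
and `Ψ` is continuous, then `Ψ(gbarg, gbargt) = Ψ(g, gt)` for all `gbar, g, gt`, so `T`
is a group convolution with kernel `ψ(u) = Ψ(e,u)`. -/
theorem equivariant_linear_operator_is_group_conv {G : Type*} [Group G]
    [TopologicalSpace G] [IsTopologicalGroup G] [LocallyCompactSpace G]
    [MeasurableSpace G] [BorelSpace G]
    (μ : Measure G) [μ.IsHaarMeasure]
    (Ψ : G × G → ℝ) (hΨ : Continuous Ψ)
    (hT : ∀ f : G → ℝ, MemLp f 2 μ → ∀ gbar g : G,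
      (∫ gt, Ψ (g, gt) * f (gbar⁻¹ * gt) ∂μ) = ∫ gt, Ψ (gbar⁻¹ * g, gt) * f gt ∂μ) :
    ∀ gbar g gt : G, Ψ (gbar * g, gbar * gt) = Ψ (g, gt) := by
  intro gbar g
  refine congrFun (Continuous.eq_of_forall_integral_mul_eq (μ := μ) (by fun_prop) (by fun_prop)
    fun f hf hf_supp => ?_)
  have hequiv := hT f (hf.memLp_of_hasCompactSupport hf_supp) gbar (gbar * g)
  rw [← integral_mul_left_eq_self _ gbar, inv_mul_cancel_left] at hequiv
  simpa only [inv_mul_cancel_left] using hequiv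
end

section
/- The attentive group convolution 𝔄[f](g) = ∫_G 𝒜[f](g, g̃) ψ(g⁻¹g̃) f(g̃) dμ(g̃) is equivariant (𝔄[L_ḡ f] = L_ḡ[𝔄 f] for all ḡ ∈ G and all f) if the attention operator 𝒜 satisfies the constraint 𝒜[L_ḡ f](g, g̃) = 𝒜[f](ḡ⁻¹g, ḡ⁻¹g̃) for all ḡ, g, g̃ ∈ G. -/
open MeasureTheory

section AttentiveGroupConv

variable {G : Type*} [Group G] [MeasurableSpace G]

noncomputable def attentiveGroupConv (μ : Measure G) (ψ : G → ℝ) (A : (G → ℝ) → G → G → ℝ)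
    (f : G → ℝ) (g : G) : ℝ :=
  ∫ gt, A f g gt * ψ (g⁻¹ * gt) * f gt ∂μ

theorem attentiveGroupConv_leftTranslate [MeasurableMul G] (μ : Measure G)
    [μ.IsMulLeftInvariant] (ψ : G → ℝ) (A : (G → ℝ) → G → G → ℝ) (f : G → ℝ) (gbar : G)
    (hA : ∀ g gt, A (fun x => f (gbar⁻¹ * x)) g gt = A f (gbar⁻¹ * g) (gbar⁻¹ * gt))
    (g : G) :
    attentiveGroupConv μ ψ A (fun x => f (gbar⁻¹ * x)) g
      = attentiveGroupConv μ ψ A f (gbar⁻¹ * g) := by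
  have integrand_eq : ∀ gt : G,
      A (fun x => f (gbar⁻¹ * x)) g gt * ψ (g⁻¹ * gt) * f (gbar⁻¹ * gt)
        = A f (gbar⁻¹ * g) (gbar⁻¹ * gt) * ψ ((gbar⁻¹ * g)⁻¹ * (gbar⁻¹ * gt))
            * f (gbar⁻¹ * gt) := by
    intro gt
    rw [hA, mul_inv_rev, inv_inv, mul_assoc g⁻¹, mul_inv_cancel_left]
  simp only [attentiveGroupConv, integrand_eq]
  exact integral_mul_left_eq_self
    (fun gt => A f (gbar⁻¹ * g) gt * ψ ((gbar⁻¹ * g)⁻¹ * gt) * f gt) gbar⁻¹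

end AttentiveGroupConv

theorem attentive_group_conv_equivariant_of_constraint_general {G : Type*} [Group G]
    [TopologicalSpace G] [IsTopologicalGroup G]
    [MeasurableSpace G] [BorelSpace G]
    (μ : Measure G) [μ.IsMulLeftInvariant]
    (ψ : G → ℝ)
    (A : (G → ℝ) → G → G → ℝ)
    (hconstraint : ∀ (f : G → ℝ) (gbar g gt : G),
      A (fun x => f (gbar⁻¹ * x)) g gt = A f (gbar⁻¹ * g) (gbar⁻¹ * gt)) :
    ∀ (f : G → ℝ) (gbar g : G),
      (∫ gt, A (fun x => f (gbar⁻¹ * x)) g gt * ψ (g⁻¹ * gt) * f (gbar⁻¹ * gt) ∂μ)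
        = ∫ gt, A f (gbar⁻¹ * g) gt * ψ ((gbar⁻¹ * g)⁻¹ * gt) * f gt ∂μ :=
  fun f gbar => attentiveGroupConv_leftTranslate μ ψ A f gbar (hconstraint f gbar)

/-- The attentive group convolution
`𝔄[f](g) = ∫ 𝒜[f](g,gt) ψ(g⁻¹gt) f(gt) dμ(gt)` is equivariant
(`𝔄[L_gbar f] = L_gbar[𝔄 f]`) if the attention operator satisfies the constraint
`𝒜[L_gbar f](g, gt) = 𝒜[f](gbar⁻¹g, gbar⁻¹gt)`. -/
theorem attentive_group_conv_equivariant_of_constraint {G : Type*} [Group G]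
    [TopologicalSpace G] [IsTopologicalGroup G] [LocallyCompactSpace G]
    [MeasurableSpace G] [BorelSpace G]
    (μ : Measure G) [μ.IsMulLeftInvariant]
    (ψ : G → ℝ) (hψm : Measurable ψ) (Cψ : ℝ) (hψb : ∀ u, |ψ u| ≤ Cψ)
    (A : (G → ℝ) → G → G → ℝ)
    (hA01 : ∀ f g gt, A f g gt ∈ Set.Icc (0 : ℝ) 1)
    (hconstraint : ∀ (f : G → ℝ) (gbar g gt : G),
      A (fun x => f (gbar⁻¹ * x)) g gt = A f (gbar⁻¹ * g) (gbar⁻¹ * gt))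
    (hint : ∀ (f : G → ℝ) (g : G),
      Integrable (fun gt => A f g gt * ψ (g⁻¹ * gt) * f gt) μ) :
    ∀ (f : G → ℝ) (gbar g : G),
      (∫ gt, A (fun x => f (gbar⁻¹ * x)) g gt * ψ (g⁻¹ * gt) * f (gbar⁻¹ * gt) ∂μ)
        = ∫ gt, A f (gbar⁻¹ * g) gt * ψ ((gbar⁻¹ * g)⁻¹ * gt) * f gt ∂μ :=
  attentive_group_conv_equivariant_of_constraint_general μ ψ A hconstraint
end

section
/- Suppose the attention map generated by 𝒜 is invariant in its first argument, i.e., 𝒜[f](g, g̃) = 𝒜[f](e, g̃) for all g, g̃ and all f, and define 𝒜'[f](g̃) := 𝒜[f](e, g̃). Then 𝒜 satisfies the equivariance constraint 𝒜[L_ḡ f](g, g̃) = 𝒜[f](ḡ⁻¹g, ḡ⁻¹g̃) for all ḡ, g, g̃ if and only if 𝒜' is an equivariant operator: 𝒜'[L_ḡ f] = L_ḡ[𝒜'[f]] for all ḡ ∈ G and all f. -/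
/-- For an attention operator `𝒜` that is invariant in its first argument
(`𝒜[f](g, gt) = 𝒜[f](e, gt)`), with `𝒜'[f](gt) := 𝒜[f](e, gt)`, the equivariance
constraint `𝒜[L_gbar f](g, gt) = 𝒜[f](gbar⁻¹g, gbar⁻¹gt)` holds for all `gbar, g, gt` if and
only if `𝒜'` is an equivariant operator: `𝒜'[L_gbar f] = L_gbar[𝒜'[f]]`. -/
theorem first_argument_invariant_attention_constraint_iff_equivariant
    {G : Type*} [Group G] (A : (G → ℝ) → G → G → ℝ)
    (hinv : ∀ (f : G → ℝ) (g gt : G), A f g gt = A f 1 gt) :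
    (∀ (f : G → ℝ) (gbar g gt : G),
      A (fun x => f (gbar⁻¹ * x)) g gt = A f (gbar⁻¹ * g) (gbar⁻¹ * gt)) ↔
    (∀ (f : G → ℝ) (gbar gt : G),
      A (fun x => f (gbar⁻¹ * x)) 1 gt = A f 1 (gbar⁻¹ * gt)) := by
  refine ⟨fun hconstraint f gbar gt => ?_, fun hequiv f gbar g gt => ?_⟩
  · rw [hconstraint f gbar 1 gt, hinv]
  · rw [hinv, hequiv f gbar gt, hinv f (gbar⁻¹ * g)]
end
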